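/- In R-Wythoff, a position (a,b) with a ≤ b has Sprague–Grundy value 1 if and only if (a,b) ∈ B = {(2,2), (4,6)} ∪ {(⌊φn⌋ − 1, ⌊φn⌋ + n − 1) : n ≥ 1, n ≠ 2}, where φ = (1+√5)/2. -/

import Mathlib

/-! The positions of value 0 are the Wythoff pairs `(⌊φn⌋, ⌊φn⌋ + n)`, as in Wythoff's game: by
Rayleigh's theorem the sequences `⌊φn⌋` and `⌊φn⌋ + n` (`n ≥ 1`) partition the positive integers,
so no move joins two Wythoff pairs and every other position can move to one.

Value 1 is then obtained from a kernel argument: a set `S` of positions of value `≥ k` with no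
move inside `S`, and a move into `S` from every other position of value `≥ k`, is exactly the set
of positions of value `k`. For `k = 1` and `S = B`, the members of `B` other than `(2,2)` and `(4,6)`
are Wythoff pairs translated by `(-1,-1)` and moves commute with translation, so there is no move
inside `B`; reaching `B` is a case analysis on whether `a + 1` has the form `⌊φn⌋` or `⌊φn⌋ + n`,
the exceptions being settled by `⌊φn⌋ = 1, 3, 4, 6, 8` for `n = 1, …, 5`.
-/

noncomputable section

/-- The golden ratio. -/
def phi : ℝ := (1 + Real.sqrt 5) / 2

/-- Minimum excluded value of a set of naturals. -/
def mex (S : Set ℕ) : ℕ := sInf {n | n ∉ S}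

/-- Sort a pair of naturals into nondecreasing order. -/
def sortPair (p : ℕ × ℕ) : ℕ × ℕ := (min p.1 p.2, max p.1 p.2)

/-- Moves of R-Wythoff (positions are unordered pairs of pile sizes): remove a
positive number of tokens from the larger pile (either pile if equal), or an
equal positive number of tokens from both piles. -/
def RMove (p q : ℕ × ℕ) : Prop :=
  (∃ t < max p.1 p.2, sortPair q = sortPair (min p.1 p.2, t)) ∨
  (∃ k, 0 < k ∧ k ≤ min p.1 p.2 ∧ sortPair q = (min p.1 p.2 - k, max p.1 p.2 - k))

lemma RMove.sum_lt {p q : ℕ × ℕ} (h : RMove p q) : q.1 + q.2 < p.1 + p.2 := by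
  rcases h with ⟨t, ht, hq⟩ | ⟨k, hk0, hk, hq⟩ <;>
  · simp only [sortPair, Prod.mk.injEq] at hq
    omega

/-- Sprague–Grundy function of R-Wythoff. -/
noncomputable def grundyR : ℕ × ℕ → ℕ
  | p => mex {v | ∃ q, ∃ _ : RMove p q, grundyR q = v}
termination_by p => p.1 + p.2
decreasing_by exact RMove.sum_lt (by assumption)

/-- P-positions of R-Wythoff: a position is P iff every move leads to a
non-P (i.e. N) position. -/
def RPPos : ℕ × ℕ → Prop
  | p => ∀ q, RMove p q → ¬ RPPos q
termination_by p => p.1 + p.2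
decreasing_by exact RMove.sum_lt (by assumption)

open Real

lemma phi_pos : 0 < phi := goldenRatio_pos

lemma one_lt_phi : 1 < phi := one_lt_goldenRatio

lemma goldenRatio_holderConjugate : goldenRatio.HolderConjugate (goldenRatio + 1) := by
  refine Real.holderConjugate_iff.mpr ⟨one_lt_goldenRatio, ?_⟩
  rw [← eq_inv_of_mul_eq_one_left (a := goldenRatio - 1) (by linear_combination goldenRatio_sq),
    ← eq_inv_of_mul_eq_one_left (a := 2 - goldenRatio) (by linear_combination -goldenRatio_sq)]
  ring

lemma natCast_mem_beattySeq_pos_iff {r : ℝ} (hr : 0 ≤ r) (m : ℕ) :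
    (m : ℤ) ∈ {beattySeq r k | k > 0} ↔ ∃ n : ℕ, 0 < n ∧ ⌊r * n⌋₊ = m := by
  have hfloor (n : ℕ) : beattySeq r n = ⌊r * n⌋₊ := by
    rw [beattySeq, Int.cast_natCast, mul_comm, Int.natCast_floor_eq_floor (by positivity)]
  constructor
  · rintro ⟨k, hk, hkm⟩
    lift k to ℕ using hk.le
    exact ⟨k, by exact_mod_cast hk, by rw [hfloor] at hkm; exact_mod_cast hkm⟩
  · rintro ⟨n, hn, rfl⟩
    exact ⟨n, by exact_mod_cast hn, hfloor n⟩

def wythoffA (n : ℕ) : ℕ := ⌊phi * n⌋₊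

lemma wythoffA_add_self (n : ℕ) : wythoffA n + n = ⌊(phi + 1) * n⌋₊ := by
  rw [wythoffA, add_mul, one_mul, Nat.floor_add_natCast (mul_nonneg phi_pos.le n.cast_nonneg)]

lemma xor_wythoffA_wythoffA_add_self (m : ℕ) (hm : 0 < m) :
    Xor (∃ n, 0 < n ∧ wythoffA n = m) (∃ n, 0 < n ∧ wythoffA n + n = m) := by
  have hpart := Set.ext_iff.mp (goldenRatio_irrational.beattySeq_symmDiff_beattySeq_pos
    goldenRatio_holderConjugate) m
  rw [Set.mem_symmDiff, natCast_mem_beattySeq_pos_iff goldenRatio_pos.le,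
    natCast_mem_beattySeq_pos_iff (by linarith [goldenRatio_pos])] at hpart
  simp only [Set.mem_ofPred_eq, Nat.cast_pos, hm, iff_true] at hpart
  simp_rw [wythoffA_add_self]
  exact hpart

lemma wythoffA_zero : wythoffA 0 = 0 := by simp [wythoffA]

lemma self_le_wythoffA (n : ℕ) : n ≤ wythoffA n :=
  Nat.le_floor (by nlinarith [one_lt_phi, (Nat.cast_nonneg n : (0 : ℝ) ≤ n)])

lemma wythoffA_strictMono : StrictMono wythoffA := by
  refine strictMono_nat_of_lt_succ fun n ↦ Nat.lt_iff_add_one_le.mpr (Nat.le_floor ?_)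
  have hfloor : (wythoffA n : ℝ) ≤ phi * n := Nat.floor_le (mul_nonneg phi_pos.le n.cast_nonneg)
  push_cast
  linarith [one_lt_phi]

lemma wythoffA_initial_values :
    wythoffA 1 = 1 ∧ wythoffA 2 = 3 ∧ wythoffA 3 = 4 ∧ wythoffA 4 = 6 ∧ wythoffA 5 = 8 := by
  have h5 : Real.sqrt 5 ^ 2 = 5 := Real.sq_sqrt (by norm_num)
  have hlo : 8 / 5 ≤ phi := by
    unfold phi; nlinarith [Real.sqrt_nonneg 5]
  have hhi : phi < 5 / 3 := by
    unfold phi; nlinarith [Real.sqrt_nonneg 5]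
  refine ⟨?_, ?_, ?_, ?_, ?_⟩ <;>
  · rw [wythoffA, Nat.floor_eq_iff (by norm_num; linarith)]
    constructor <;> push_cast <;> linarith

lemma wythoffA_cases (n : ℕ) :
    n = 0 ∧ wythoffA n = 0 ∨ n = 1 ∧ wythoffA n = 1 ∨ n = 2 ∧ wythoffA n = 3 ∨
      n = 3 ∧ wythoffA n = 4 ∨ n = 4 ∧ wythoffA n = 6 ∨ 5 ≤ n ∧ 8 ≤ wythoffA n := by
  obtain ⟨h1, h2, h3, h4, h5⟩ := wythoffA_initial_values
  rcases Nat.lt_or_ge n 5 with hn | hn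
  · interval_cases n <;> simp [wythoffA_zero, *]
  · have := wythoffA_strictMono.monotone hn
    omega

lemma mex_notMem {S : Set ℕ} (hS : S.Finite) : mex S ∉ S :=
  Nat.sInf_mem (s := {n | n ∉ S}) hS.exists_notMem

lemma mem_of_lt_mex {S : Set ℕ} {i : ℕ} (h : i < mex S) : i ∈ S := by
  simpa using Nat.notMem_of_lt_sInf h

lemma grundyR_eq_mex (p : ℕ × ℕ) :
    grundyR p = mex {v | ∃ q, ∃ _ : RMove p q, grundyR q = v} := by
  rw [grundyR]

lemma grundyR_ne_of_rMove {p q : ℕ × ℕ} (h : RMove p q) : grundyR q ≠ grundyR p := by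
  have hfin : {v | ∃ q, ∃ _ : RMove p q, grundyR q = v}.Finite := by
    refine (((Set.finite_Iio (p.1 + p.2)).prod (Set.finite_Iio (p.1 + p.2))).image grundyR).subset ?_
    rintro _ ⟨q, hq, rfl⟩
    have := hq.sum_lt
    exact ⟨q, ⟨by simp only [Set.mem_Iio]; omega, by simp only [Set.mem_Iio]; omega⟩, rfl⟩
  intro hqp
  exact mex_notMem hfin (grundyR_eq_mex p ▸ ⟨q, h, hqp⟩)

lemma exists_rMove_grundyR_eq_of_lt {p : ℕ × ℕ} {i : ℕ} (h : i < grundyR p) :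
    ∃ q, RMove p q ∧ grundyR q = i := by
  rw [grundyR_eq_mex] at h
  obtain ⟨q, hq, rfl⟩ := mem_of_lt_mex h
  exact ⟨q, hq, rfl⟩

lemma grundyR_swap (x y : ℕ) : grundyR (y, x) = grundyR (x, y) := by
  have hmove : RMove (y, x) = RMove (x, y) := by
    ext q
    simp only [RMove, min_comm y, max_comm y]
  rw [grundyR_eq_mex, grundyR_eq_mex (x, y), hmove]

lemma grundyR_sort (q : ℕ × ℕ) : grundyR (min q.1 q.2, max q.1 q.2) = grundyR q := by
  rcases le_total q.1 q.2 with h | h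
  · rw [min_eq_left h, max_eq_right h]
  · rw [min_eq_right h, max_eq_left h, grundyR_swap]

-- A move from `(a, b)` with `a ≤ b` to `(c, d)` with `c ≤ d`: the larger pile is reduced but stays
-- at least `a`, or it is reduced below `a`, or both piles are reduced by `a - c`.
def SortedMove (a b c d : ℕ) : Prop :=
  c ≤ d ∧ ((c = a ∧ d < b) ∨ (d = a ∧ c < a) ∨ (c < a ∧ a + d = c + b))

lemma rMove_iff_sortedMove {a b : ℕ} (hab : a ≤ b) (q : ℕ × ℕ) :
    RMove (a, b) q ↔ SortedMove a b (min q.1 q.2) (max q.1 q.2) := by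
  simp only [RMove, SortedMove, sortPair, min_eq_left hab, max_eq_right hab, Prod.mk.injEq]
  constructor
  · rintro (⟨t, ht, h1, h2⟩ | ⟨k, hk0, hk, h1, h2⟩) <;> omega
  · rintro ⟨hcd, (⟨h1, h2⟩ | ⟨h1, h2⟩ | ⟨h1, h2⟩)⟩
    · exact Or.inl ⟨max q.1 q.2, by omega, by omega, by omega⟩
    · exact Or.inl ⟨min q.1 q.2, by omega, by omega, by omega⟩
    · exact Or.inr ⟨a - min q.1 q.2, by omega, by omega, by omega, by omega⟩

lemma SortedMove.rMove {a b c d : ℕ} (hab : a ≤ b) (hm : SortedMove a b c d) :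
    RMove (a, b) (c, d) :=
  (rMove_iff_sortedMove hab (c, d)).mpr (by rwa [min_eq_left hm.1, max_eq_right hm.1])

lemma grundyR_eq_iff_of_kernel {k : ℕ} {S : ℕ → ℕ → Prop}
    (hS : ∀ a b, a ≤ b → S a b → k ≤ grundyR (a, b))
    (hSS : ∀ a b c d, S a b → SortedMove a b c d → ¬ S c d)
    (hcover : ∀ a b, a ≤ b → k ≤ grundyR (a, b) → ¬ S a b →
      ∃ c d, SortedMove a b c d ∧ S c d)
    (a b : ℕ) (hab : a ≤ b) : grundyR (a, b) = k ↔ S a b := by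
  induction hs : a + b using Nat.strong_induction_on generalizing a b with
  | _ s ih =>
  have ih' {c d : ℕ} (hm : SortedMove a b c d) : grundyR (c, d) = k ↔ S c d :=
    ih (c + d) (by unfold SortedMove at hm; omega) c d hm.1 rfl
  constructor
  · intro hk
    by_contra hnS
    obtain ⟨c, d, hm, hScd⟩ := hcover a b hab hk.ge hnS
    exact grundyR_ne_of_rMove (hm.rMove hab) ((ih' hm).mpr hScd ▸ hk.symm)
  · intro hSab
    refine (hS a b hab hSab).eq_of_not_lt' fun hlt ↦ ?_
    obtain ⟨q, hq, hqk⟩ := exists_rMove_grundyR_eq_of_lt hlt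
    have hm := (rMove_iff_sortedMove hab q).mp hq
    exact hSS a b _ _ hSab hm ((ih' hm).mp (by rw [grundyR_sort, hqk]))

lemma wythoffA_ne_wythoffA_add_self {n m : ℕ} (hn : 0 < n) (hm : 0 < m) :
    wythoffA n ≠ wythoffA m + m := by
  intro h
  rcases xor_wythoffA_wythoffA_add_self (wythoffA m + m) (by omega) with ⟨-, hB⟩ | ⟨-, hA⟩
  · exact hB ⟨m, hm, rfl⟩
  · exact hA ⟨n, hn, h⟩

lemma exists_wythoffA_or_wythoffA_add_self {m : ℕ} (hm : 0 < m) :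
    (∃ n, 0 < n ∧ wythoffA n = m) ∨ ∃ n, 0 < n ∧ wythoffA n + n = m :=
  (xor_wythoffA_wythoffA_add_self m hm).or

def IsWythoffPair (a b : ℕ) : Prop := ∃ n, a = wythoffA n ∧ b = wythoffA n + n

lemma not_isWythoffPair_of_sortedMove {a b c d : ℕ} (hP : IsWythoffPair a b)
    (hm : SortedMove a b c d) : ¬ IsWythoffPair c d := by
  obtain ⟨n, rfl, rfl⟩ := hP
  rintro ⟨m, rfl, rfl⟩
  obtain ⟨-, ⟨hA, hlt⟩ | ⟨hA, hlt⟩ | ⟨hlt, hdiff⟩⟩ := hm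
  · have := wythoffA_strictMono.injective hA
    omega
  · rcases Nat.eq_zero_or_pos n with rfl | hn
    · rw [wythoffA_zero] at hlt; omega
    rcases Nat.eq_zero_or_pos m with rfl | hm
    · rw [wythoffA_zero] at hA; have := self_le_wythoffA n; omega
    exact wythoffA_ne_wythoffA_add_self hn hm hA.symm
  · have : m = n := by omega
    subst this
    omega

lemma exists_sortedMove_isWythoffPair {a b : ℕ} (hab : a ≤ b) (hP : ¬ IsWythoffPair a b) :
    ∃ c d, SortedMove a b c d ∧ IsWythoffPair c d := by
  have hP0 : IsWythoffPair 0 0 := ⟨0, by rw [wythoffA_zero], by rw [wythoffA_zero]⟩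
  rcases Nat.eq_zero_or_pos a with rfl | ha
  · have hb : 0 < b := Nat.pos_of_ne_zero fun hb ↦ hP (hb ▸ hP0)
    exact ⟨0, 0, ⟨le_rfl, Or.inl ⟨rfl, hb⟩⟩, hP0⟩
  rcases exists_wythoffA_or_wythoffA_add_self ha with ⟨n, hn, rfl⟩ | ⟨m, hm, rfl⟩
  · rcases lt_trichotomy b (wythoffA n + n) with hlt | rfl | hgt
    · have hd := wythoffA_strictMono (show b - wythoffA n < n by omega)
      exact ⟨_, _, ⟨by omega, Or.inr (Or.inr ⟨hd, by omega⟩)⟩, ⟨b - wythoffA n, rfl, rfl⟩⟩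
    · exact absurd ⟨n, rfl, rfl⟩ hP
    · exact ⟨_, _, ⟨by omega, Or.inl ⟨rfl, hgt⟩⟩, ⟨n, rfl, rfl⟩⟩
  · have := self_le_wythoffA m
    exact ⟨_, _, ⟨by omega, Or.inr (Or.inl ⟨rfl, by omega⟩)⟩, ⟨m, rfl, rfl⟩⟩

lemma grundyR_eq_zero_iff {a b : ℕ} (hab : a ≤ b) :
    grundyR (a, b) = 0 ↔ IsWythoffPair a b :=
  grundyR_eq_iff_of_kernel (fun _ _ _ _ ↦ Nat.zero_le _)
    (fun _ _ _ _ hP hm ↦ not_isWythoffPair_of_sortedMove hP hm)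
    (fun _ _ hab _ hP ↦ exists_sortedMove_isWythoffPair hab hP) a b hab

def IsShiftedWythoffPair (a b : ℕ) : Prop :=
  (a = 2 ∧ b = 2) ∨ (a = 4 ∧ b = 6) ∨
    ∃ n, 0 < n ∧ n ≠ 2 ∧ a = wythoffA n - 1 ∧ b = wythoffA n + n - 1

lemma isShiftedWythoffPair_zero_one : IsShiftedWythoffPair 0 1 :=
  Or.inr (Or.inr ⟨1, one_pos, by omega, by rw [wythoffA_initial_values.1],
    by rw [wythoffA_initial_values.1]⟩)

lemma not_isWythoffPair_of_isShiftedWythoffPair {a b : ℕ} (hB : IsShiftedWythoffPair a b) :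
    ¬ IsWythoffPair a b := by
  rintro ⟨m, rfl, rfl⟩
  have := wythoffA_cases m
  rcases hB with h | h | ⟨n, hn, -, h1, h2⟩
  · omega
  · omega
  · have := self_le_wythoffA n
    obtain rfl : m = n := by omega
    omega

lemma not_isShiftedWythoffPair_of_sortedMove {a b c d : ℕ} (hB : IsShiftedWythoffPair a b)
    (hm : SortedMove a b c d) : ¬ IsShiftedWythoffPair c d := by
  obtain ⟨hcd, hmove⟩ := id hm
  rcases hB with ⟨rfl, rfl⟩ | ⟨rfl, rfl⟩ | ⟨k, hk, hk2, rfl, rfl⟩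
  · rintro (⟨rfl, rfl⟩ | ⟨rfl, rfl⟩ | ⟨n, hn, hn2, rfl, rfl⟩)
    · omega
    · omega
    · have := wythoffA_cases n
      omega
  · rintro (⟨rfl, rfl⟩ | ⟨rfl, rfl⟩ | ⟨n, hn, hn2, rfl, rfl⟩)
    · omega
    · omega
    · have := wythoffA_cases n
      omega
  · have := wythoffA_cases k
    rintro (⟨rfl, rfl⟩ | ⟨rfl, rfl⟩ | ⟨n, hn, hn2, rfl, rfl⟩)
    · omega
    · omega
    -- translated by `(1, 1)`, this would be a move between two Wythoff pairs
    · have := wythoffA_cases n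
      refine not_isWythoffPair_of_sortedMove (c := wythoffA n) (d := wythoffA n + n)
        ⟨k, rfl, rfl⟩ ?_ ⟨n, rfl, rfl⟩
      unfold SortedMove at hm ⊢
      omega

lemma isShiftedWythoffPair_two_two : IsShiftedWythoffPair 2 2 := Or.inl ⟨rfl, rfl⟩

lemma isShiftedWythoffPair_four_six : IsShiftedWythoffPair 4 6 := Or.inr (Or.inl ⟨rfl, rfl⟩)

lemma exists_sortedMove_isShiftedWythoffPair_of_wythoffA_eq {a b n : ℕ} (hab : a < b)
    (hn : 0 < n) (ha : wythoffA n = a + 1) (hP : ¬ IsWythoffPair a b)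
    (hB : ¬ IsShiftedWythoffPair a b) :
    ∃ c d, SortedMove a b c d ∧ IsShiftedWythoffPair c d := by
  have htable := wythoffA_cases n
  have hA2 := wythoffA_initial_values.2.1
  rcases Nat.lt_or_ge b (wythoffA n + n - 1) with hlt | hge
  · obtain ⟨d, hd, rfl⟩ : ∃ d, 0 < d ∧ b = a + d := ⟨b - a, by omega, by omega⟩
    have hdA := wythoffA_strictMono (show d < n by omega)
    by_cases hd2 : d = 2
    · subst hd2
      by_cases hn3 : n = 3
      · exact absurd ⟨2, by omega, by omega⟩ hP
      · exact ⟨4, 6, ⟨by omega, Or.inr (Or.inr ⟨by omega, by omega⟩)⟩,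
          isShiftedWythoffPair_four_six⟩
    · have := self_le_wythoffA d
      exact ⟨_, _, ⟨by omega, Or.inr (Or.inr ⟨by omega, by omega⟩)⟩,
        Or.inr (Or.inr ⟨d, hd, hd2, rfl, rfl⟩)⟩
  · by_cases hn2 : n = 2
    · exact ⟨2, 2, ⟨le_rfl, Or.inl ⟨by omega, by omega⟩⟩, isShiftedWythoffPair_two_two⟩
    rcases hge.eq_or_lt with heq | hgt
    · exact absurd (Or.inr (Or.inr ⟨n, hn, hn2, by omega, heq.symm⟩)) hB
    · exact ⟨_, _, ⟨by omega, Or.inl ⟨rfl, hgt⟩⟩, Or.inr (Or.inr ⟨n, hn, hn2, by omega, rfl⟩)⟩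

lemma exists_sortedMove_isShiftedWythoffPair_of_wythoffA_add_self_eq {a b m : ℕ} (hab : a < b)
    (hm : 0 < m) (ha : wythoffA m + m = a + 1) (hP : ¬ IsWythoffPair a b)
    (hB : ¬ IsShiftedWythoffPair a b) :
    ∃ c d, SortedMove a b c d ∧ IsShiftedWythoffPair c d := by
  by_cases hm2 : m = 2
  · subst hm2
    obtain ⟨-, hA2, hA3, -⟩ := wythoffA_initial_values
    rcases (show b = 5 ∨ b = 6 ∨ b = 7 ∨ 8 ≤ b by omega) with rfl | rfl | rfl | hb
    · exact ⟨0, 1, ⟨by omega, Or.inr (Or.inr ⟨by omega, by omega⟩)⟩,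
        isShiftedWythoffPair_zero_one⟩
    · exact absurd (show a = 4 by omega ▸ isShiftedWythoffPair_four_six) hB
    · exact absurd ⟨3, by omega, by omega⟩ hP
    · exact ⟨4, 6, ⟨by omega, Or.inl ⟨by omega, by omega⟩⟩, isShiftedWythoffPair_four_six⟩
  · have := self_le_wythoffA m
    exact ⟨_, _, ⟨by omega, Or.inr (Or.inl ⟨rfl, by omega⟩)⟩,
      Or.inr (Or.inr ⟨m, hm, hm2, rfl, by omega⟩)⟩

lemma exists_sortedMove_isShiftedWythoffPair {a b : ℕ} (hab : a ≤ b) (hP : ¬ IsWythoffPair a b)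
    (hB : ¬ IsShiftedWythoffPair a b) :
    ∃ c d, SortedMove a b c d ∧ IsShiftedWythoffPair c d := by
  have hP00 : ¬ (a = 0 ∧ b = 0) := by
    rintro ⟨rfl, rfl⟩
    exact hP ⟨0, by rw [wythoffA_zero], by rw [wythoffA_zero]⟩
  rcases hab.eq_or_lt with rfl | hlt
  · rcases (show a = 1 ∨ a = 2 ∨ 3 ≤ a by omega) with rfl | rfl | ha
    · exact ⟨0, 1, ⟨by omega, Or.inr (Or.inl ⟨rfl, by omega⟩)⟩, isShiftedWythoffPair_zero_one⟩
    · exact absurd isShiftedWythoffPair_two_two hB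
    · exact ⟨2, 2, ⟨le_rfl, Or.inr (Or.inr ⟨by omega, by omega⟩)⟩, isShiftedWythoffPair_two_two⟩
  rcases Nat.eq_zero_or_pos a with rfl | ha
  · rcases (show b = 1 ∨ 2 ≤ b by omega) with rfl | hb
    · exact absurd isShiftedWythoffPair_zero_one hB
    · exact ⟨0, 1, ⟨by omega, Or.inl ⟨rfl, by omega⟩⟩, isShiftedWythoffPair_zero_one⟩
  rcases exists_wythoffA_or_wythoffA_add_self (Nat.succ_pos a) with ⟨n, hn, hA⟩ | ⟨m, hm, hA⟩
  · exact exists_sortedMove_isShiftedWythoffPair_of_wythoffA_eq hlt hn hA hP hB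
  · exact exists_sortedMove_isShiftedWythoffPair_of_wythoffA_add_self_eq hlt hm hA hP hB

lemma grundyR_eq_one_iff {a b : ℕ} (hab : a ≤ b) :
    grundyR (a, b) = 1 ↔ IsShiftedWythoffPair a b := by
  have hpos {c d : ℕ} (hcd : c ≤ d) : 1 ≤ grundyR (c, d) ↔ ¬ IsWythoffPair c d := by
    rw [Nat.one_le_iff_ne_zero]
    exact (grundyR_eq_zero_iff hcd).not
  exact grundyR_eq_iff_of_kernel
    (fun _ _ hab hB ↦ (hpos hab).mpr (not_isWythoffPair_of_isShiftedWythoffPair hB))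
    (fun _ _ _ _ hB hm ↦ not_isShiftedWythoffPair_of_sortedMove hB hm)
    (fun _ _ hab hk hB ↦ exists_sortedMove_isShiftedWythoffPair hab ((hpos hab).mp hk) hB) a b hab

/-- In R-Wythoff, `(a,b)` with `a ≤ b` has Sprague–Grundy value 1 iff it lies in
`B = {(2,2), (4,6)} ∪ {(⌊φn⌋ - 1, ⌊φn⌋ + n - 1) : n ≥ 1, n ≠ 2}`. -/
theorem RWythoff_grundy_value_one (a b : ℕ) (hab : a ≤ b) :
    grundyR (a, b) = 1 ↔
      ((a, b) = (2, 2) ∨ (a, b) = (4, 6) ∨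
        ∃ n : ℕ, 0 < n ∧ n ≠ 2 ∧
          (a, b) = (⌊phi * n⌋₊ - 1, ⌊phi * n⌋₊ + n - 1)) := by
  simp only [grundyR_eq_one_iff hab, IsShiftedWythoffPair, wythoffA, Prod.mk.injEq]

end
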